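/- Let Γ be a tetravalent G-half-arc-transitive graph for some G ≤ Aut(Γ) such that 3 ≤ a < r, where r = rad_G(Γ) and a = att_G(Γ). Suppose γ ∈ G fixes some G-alternating cycle C setwise, as well as each of the G-attachment sets containing vertices of C (setwise). Then γ ∈ K_G(Alt_G(Γ)), i.e. γ fixes every G-alternating cycle of Γ setwise. -/

import Mathlib

/-! Common definitions for tetravalent half-arc-transitive graph theory. -/

open SimpleGraph Set

namespace HalfArc

variable {V W : Type*}

/-- A subgroup of automorphisms acts transitively on the vertices. -/
def IsVertexTrans (Γ : SimpleGraph V) (G : Subgroup (Γ ≃g Γ)) : Prop :=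
  ∀ u v : V, ∃ g ∈ G, g u = v

/-- A subgroup of automorphisms acts transitively on the edges. -/
def IsEdgeTrans (Γ : SimpleGraph V) (G : Subgroup (Γ ≃g Γ)) : Prop :=
  ∀ ⦃u v u' v' : V⦄, Γ.Adj u v → Γ.Adj u' v' →
    ∃ g ∈ G, (g u = u' ∧ g v = v') ∨ (g u = v' ∧ g v = u')

/-- A subgroup of automorphisms acts transitively on the arcs (ordered pairs of
adjacent vertices). -/
def IsArcTrans (Γ : SimpleGraph V) (G : Subgroup (Γ ≃g Γ)) : Prop :=
  ∀ ⦃u v u' v' : V⦄, Γ.Adj u v → Γ.Adj u' v' → ∃ g ∈ G, g u = u' ∧ g v = v'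

/-- Half-arc-transitive: vertex- and edge- but not arc-transitive. -/
def IsHalfArcTrans (Γ : SimpleGraph V) (G : Subgroup (Γ ≃g Γ)) : Prop :=
  IsVertexTrans Γ G ∧ IsEdgeTrans Γ G ∧ ¬ IsArcTrans Γ G

/-- An alternating cycle of length `n` in a graph `Γ` whose edges carry an
orientation `O`: a cyclic sequence of pairwise distinct vertices in which
consecutive vertices are adjacent and any two consecutive edges have opposite
orientations. -/
structure AltCycle (Γ : SimpleGraph V) (O : V → V → Prop) (n : ℕ) where
  f : ZMod n → V
  inj : Function.Injective f
  adj : ∀ i, Γ.Adj (f i) (f (i + 1))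
  alt : ∀ i, O (f i) (f (i + 1)) ↔ O (f (i + 2)) (f (i + 1))

/-- The vertex set of an alternating cycle. -/
def cycVerts {Γ : SimpleGraph V} {O : V → V → Prop} {n : ℕ} (c : AltCycle Γ O n) : Set V :=
  Set.range c.f

/-- The edge set of an alternating cycle. -/
def cycEdges {Γ : SimpleGraph V} {O : V → V → Prop} {n : ℕ} (c : AltCycle Γ O n) :
    Set (Sym2 V) :=
  Set.range fun i => s(c.f i, c.f (i + 1))

/-- The sets of edges of alternating cycles (an alternating cycle, as a subgraph,
is determined by its edge set). -/
def IsAltEdgeSet (Γ : SimpleGraph V) (O : V → V → Prop) (n : ℕ) (E : Set (Sym2 V)) : Prop :=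
  ∃ c : AltCycle Γ O n, cycEdges c = E

/-- The vertex sets of alternating cycles. -/
def IsAltVertSet (Γ : SimpleGraph V) (O : V → V → Prop) (n : ℕ) (A : Set V) : Prop :=
  ∃ c : AltCycle Γ O n, cycVerts c = A

/-- The set of vertices covered by a set of edges. -/
def suppOf (E : Set (Sym2 V)) : Set V := {v | ∃ e ∈ E, v ∈ e}

/-- The graph of alternating cycles: its vertices are the alternating cycles
(represented by their edge sets), two of them adjacent whenever they share a vertex. -/
def altGraph (Γ : SimpleGraph V) (O : V → V → Prop) (n : ℕ) :
    SimpleGraph {E : Set (Sym2 V) // IsAltEdgeSet Γ O n E} where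
  Adj X Y := X ≠ Y ∧ (suppOf X.1 ∩ suppOf Y.1).Nonempty
  symm := ⟨by
    rintro X Y ⟨hne, x, hx1, hx2⟩
    exact ⟨hne.symm, x, hx2, hx1⟩⟩
  loopless := ⟨by rintro X ⟨hne, -⟩; exact hne rfl⟩

/-- The attachment sets: nonempty intersections of (the vertex sets of) two distinct
alternating cycles. -/
def IsAttSet (Γ : SimpleGraph V) (O : V → V → Prop) (n : ℕ) (A : Set V) : Prop :=
  ∃ c c' : AltCycle Γ O n, cycEdges c ≠ cycEdges c' ∧ (cycVerts c ∩ cycVerts c').Nonempty ∧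
    A = cycVerts c ∩ cycVerts c'

/-- `attachmentIs Γ O n a` : any two distinct alternating cycles with nonempty
intersection meet in exactly `a` vertices. -/
def attachmentIs (Γ : SimpleGraph V) (O : V → V → Prop) (n a : ℕ) : Prop :=
  ∀ A : Set V, IsAttSet Γ O n A → A.ncard = a

/-- A `k`-step rotation of an alternating cycle (in one of the two directions). -/
def IsRot {Γ : SimpleGraph V} {O : V → V → Prop} {n : ℕ} (c : AltCycle Γ O n)
    (g : V → V) (k : ℕ) : Prop :=
  (∀ i, g (c.f i) = c.f (i + k)) ∨ (∀ i, g (c.f i) = c.f (i - k))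

/-- The setup of the paper: a finite connected tetravalent graph `Γ`, a subgroup `G`
of its automorphism group acting half-arc-transitively, one of the two `G`-induced
orientations `O` of the edges of `Γ` (an orbit of `G` on arcs), the `G`-radius `r`
(half the common length of all `G`-alternating cycles) and the `G`-attachment
number `att`, together with the basic structural facts relating them. -/
structure Setup (V : Type*) where
  Γ : SimpleGraph V
  finite : Finite V
  conn : Γ.Connected
  tetra : ∀ v : V, (Γ.neighborSet v).ncard = 4
  G : Subgroup (Γ ≃g Γ)
  hat : IsHalfArcTrans Γ G
  O : V → V → Prop
  O_adj : ∀ ⦃u v⦄, O u v → Γ.Adj u v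
  O_choice : ∀ ⦃u v⦄, Γ.Adj u v → (O u v ↔ ¬ O v u)
  O_inv : ∀ g ∈ G, ∀ ⦃u v⦄, O u v → O (g u) (g v)
  O_orbit : ∀ ⦃u v u' v'⦄, O u v → O u' v' → ∃ g ∈ G, g u = u' ∧ g v = v'
  r : ℕ
  r_pos : 0 < r
  /-- every vertex lies on exactly two `G`-alternating cycles, each of length `2 * r` -/
  alt_cover : ∀ v : V, {E : Set (Sym2 V) | IsAltEdgeSet Γ O (2 * r) E ∧ v ∈ suppOf E}.ncard = 2
  att : ℕ
  att_pos : 0 < att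
  /-- any two non-disjoint `G`-alternating cycles meet in exactly `att` vertices -/
  att_eq : attachmentIs Γ O (2 * r) att
  att_dvd : att ∣ 2 * r

namespace Setup

variable {V : Type*} (S : Setup V)

/-- The kernel of the action of `G` on the set of `G`-alternating cycles:
the elements of `G` fixing every `G`-alternating cycle setwise. -/
def altKernel : Subgroup (S.Γ ≃g S.Γ) where
  carrier := {g | g ∈ S.G ∧ ∀ E : Set (Sym2 V),
    IsAltEdgeSet S.Γ S.O (2 * S.r) E → Sym2.map (g : V → V) '' E = E}
  one_mem' := by
    refine ⟨S.G.one_mem, fun E _ => ?_⟩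
    have : Sym2.map ((1 : S.Γ ≃g S.Γ) : V → V) = id := by
      funext e
      have : ((1 : S.Γ ≃g S.Γ) : V → V) = id := rfl
      rw [this, Sym2.map_id, id]
    rw [this, Set.image_id]
  mul_mem' := by
    rintro g h ⟨hg, hg'⟩ ⟨hh, hh'⟩
    refine ⟨S.G.mul_mem hg hh, fun E hE => ?_⟩
    have hcomp : Sym2.map ((g * h : S.Γ ≃g S.Γ) : V → V)
        = Sym2.map (g : V → V) ∘ Sym2.map (h : V → V) := by
      funext e
      have : ((g * h : S.Γ ≃g S.Γ) : V → V) = (g : V → V) ∘ (h : V → V) := rfl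
      rw [this, Function.comp_apply, ← Sym2.map_map]
    rw [hcomp, Set.image_comp, hh' E hE, hg' E hE]
  inv_mem' := by
    rintro g ⟨hg, hg'⟩
    refine ⟨S.G.inv_mem hg, fun E hE => ?_⟩
    conv_lhs => rw [← hg' E hE]
    rw [← Set.image_comp]
    have : Sym2.map ((g⁻¹ : S.Γ ≃g S.Γ) : V → V) ∘ Sym2.map (g : V → V) = id := by
      funext e
      rw [Function.comp_apply, Sym2.map_map]
      have h1 : ((g⁻¹ : S.Γ ≃g S.Γ) : V → V) ∘ (g : V → V) = id := by
        funext v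
        exact g.toEquiv.symm_apply_apply v
      rw [h1, Sym2.map_id]
    rw [this, Set.image_id]

/-- The kernel of the action of `G` on a collection of sets of vertices. -/
def kernelOn (P : Set V → Prop) : Subgroup (S.Γ ≃g S.Γ) where
  carrier := {g | g ∈ S.G ∧ ∀ A : Set V, P A → (g : V → V) '' A = A}
  one_mem' := ⟨S.G.one_mem, fun A _ => by
    have : ((1 : S.Γ ≃g S.Γ) : V → V) = id := rfl
    rw [this, Set.image_id]⟩
  mul_mem' := by
    rintro g h ⟨hg, hg'⟩ ⟨hh, hh'⟩
    refine ⟨S.G.mul_mem hg hh, fun A hA => ?_⟩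
    have : ((g * h : S.Γ ≃g S.Γ) : V → V) = (g : V → V) ∘ (h : V → V) := rfl
    rw [this, Set.image_comp, hh' A hA, hg' A hA]
  inv_mem' := by
    rintro g ⟨hg, hg'⟩
    refine ⟨S.G.inv_mem hg, fun A hA => ?_⟩
    conv_lhs => rw [← hg' A hA]
    rw [← Set.image_comp]
    have : ((g⁻¹ : S.Γ ≃g S.Γ) : V → V) ∘ (g : V → V) = id := by
      funext v; exact g.toEquiv.symm_apply_apply v
    rw [this, Set.image_id]

/-- The kernel of the action of `G` on the set of all `G`-attachment sets. -/
def attKernel : Subgroup (S.Γ ≃g S.Γ) :=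
  S.kernelOn (IsAttSet S.Γ S.O (2 * S.r))

/-- The block `B_s(C; u_i) = {u_{i+2sj} : 0 ≤ j < att}` of Construction 5.3. -/
def blockSet (s : ℕ) (c : AltCycle S.Γ S.O (2 * S.r)) (i : ZMod (2 * S.r)) : Set V :=
  {v | ∃ j : ℕ, j < S.att ∧ v = c.f (i + (2 * s * j : ℕ))}

/-- The imprimitivity block system `B` of Construction 5.3. -/
def Blocks (s : ℕ) : Set (Set V) :=
  {A | ∃ (c : AltCycle S.Γ S.O (2 * S.r)) (i : ZMod (2 * S.r)), A = S.blockSet s c i}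

/-- The quotient graph `Γ_B` of `Γ` with respect to the block system `B`. -/
def quotGraph (s : ℕ) : SimpleGraph {A : Set V // A ∈ S.Blocks s} where
  Adj X Y := X ≠ Y ∧ ∃ u ∈ X.1, ∃ v ∈ Y.1, S.Γ.Adj u v
  symm := ⟨by
    rintro X Y ⟨hne, u, hu, v, hv, ha⟩
    exact ⟨hne.symm, v, hv, u, hu, ha.symm⟩⟩
  loopless := ⟨by rintro X ⟨hne, -⟩; exact hne rfl⟩

/-- The kernel of the action of `G` on the quotient graph `Γ_B`. -/
def quotKernel (s : ℕ) : Subgroup (S.Γ ≃g S.Γ) :=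
  S.kernelOn (· ∈ S.Blocks s)

/-- The orientation of the edges of the quotient graph `Γ_B` induced by `O`. -/
def quotO (s : ℕ) (X Y : {A : Set V // A ∈ S.Blocks s}) : Prop :=
  ∃ u ∈ X.1, ∃ v ∈ Y.1, S.O u v

end Setup

/-- The data defining the parameters `q_t` and `q_h` of Section 3: a vertex `v`,
the two `G`-alternating cycles `c` and `c'` through `v` (with `v = u_0 = v_0` and
`v` the tail of the two arcs of `c` incident to it), and the minimality properties
defining `q_t` and `q_h`.  Here `ell = 2r/att`. -/
structure JumpData {V : Type*} (S : Setup V) where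
  v : V
  c : AltCycle S.Γ S.O (2 * S.r)
  c' : AltCycle S.Γ S.O (2 * S.r)
  ell : ℕ
  hell : S.att * ell = 2 * S.r
  hc : c.f 0 = v
  hc' : c'.f 0 = v
  hne : cycEdges c ≠ cycEdges c'
  htail₁ : S.O v (c.f 1)
  htail₂ : S.O v (c.f (-1))
  qt : ℕ
  qh : ℕ
  hqt : c'.f ((qt * ell : ℕ)) = c.f ((ell : ℕ)) ∨
    c'.f ((qt * ell : ℕ)) = c.f (-(ell : ZMod (2 * S.r)))
  hqt_min : ∀ m : ℕ, m < qt → ¬(c'.f ((m * ell : ℕ)) = c.f ((ell : ℕ)) ∨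
    c'.f ((m * ell : ℕ)) = c.f (-(ell : ZMod (2 * S.r))))
  hqh : c.f ((qh * ell : ℕ)) = c'.f ((ell : ℕ)) ∨
    c.f ((qh * ell : ℕ)) = c'.f (-(ell : ZMod (2 * S.r)))
  hqh_min : ∀ m : ℕ, m < qh → ¬(c.f ((m * ell : ℕ)) = c'.f ((ell : ℕ)) ∨
    c.f ((m * ell : ℕ)) = c'.f (-(ell : ZMod (2 * S.r))))

/-- The `G`-alternating jump `jum_G(Γ) = min {q_t, q_h}`. -/
def JumpData.jump {V : Type*} {S : Setup V} (J : JumpData S) : ℕ := min J.qt J.qh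

end HalfArc


open HalfArc

/-!
Call `g` good on a `G`-alternating cycle if it fixes the cycle and every attachment set meeting
it. As `Γ` is connected, it suffices to pass goodness from a cycle `X` to a cycle `Y` meeting it.

Index the vertices of a cycle by `ZMod (2 r)`. Even rotations of a cycle are realised in `G`
(arc-transitivity), so the positions of the attachment sets on a cycle are permuted by even
translations, and their stabilisers among the even translations are one cyclic group `H`.
A good `g` rotates `X` by some `k ∈ H`: a reflection would put `2` into `H` and force `a ≥ r`.
Let `h ∈ G` rotate `X` by a generator `e₀` of `H`, so `k = n e₀`. Then `g` and `h ^ n` agree on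
`X`, hence on the at least three vertices of `X ∩ Y`, hence on all of `Y`. If `h` reflected `Y`,
then `2 e₀ = 0`; as a reflection fixes at most two vertices, `e₀ ≠ 0`, so `H = {0, r}`. Then the
common attachment set has `4` vertices of both parities, and the reflection would have to swap
`q` with `q + r` for positions `q` of both parities, which is impossible. So `g` rotates `Y` while fixing one of its attachment sets, hence fixes all.
-/

open Pointwise

theorem IsAddCyclic.addSubgroup_eq_of_card_eq {G : Type*} [AddCommGroup G] [IsAddCyclic G]
    [Finite G] {H K : AddSubgroup G} (h : Nat.card H = Nat.card K) : H = K := by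
  have key : ∀ L : AddSubgroup G, L = (nsmulAddMonoidHom (α := G) (Nat.card L)).ker := by
    intro L
    refine AddSubgroup.eq_of_le_of_card_ge (fun x hx => ?_) ?_
    · have := congrArg Subtype.val (card_nsmul_eq_zero' (G := L) (x := ⟨x, hx⟩))
      simpa only [AddMonoidHom.mem_ker, nsmulAddMonoidHom_apply, AddSubgroup.coe_nsmul,
        ZeroMemClass.coe_zero] using this
    · rw [IsAddCyclic.card_nsmulAddMonoidHom_ker,
        Nat.gcd_eq_right (AddSubgroup.card_addSubgroup_dvd_card L)]
  rw [key H, key K, h]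

theorem Set.ncard_pair_le {α : Type*} (a b : α) : ({a, b} : Set α).ncard ≤ 2 :=
  (Set.ncard_insert_le _ _).trans (by rw [Set.ncard_singleton])

theorem zmod2_eq_of_ne_of_ne {a b c : ZMod 2} (ha : a ≠ c) (hb : b ≠ c) : a = b := by
  revert a b c; decide

theorem ZMod.eq_add_or_eq_sub_of_succ {n : ℕ} [NeZero n] (h2 : (2 : ZMod n) ≠ 0)
    {π : ZMod n → ZMod n} (hinj : Function.Injective π)
    (hstep : ∀ i, π (i + 1) = π i + 1 ∨ π (i + 1) = π i - 1) :
    (∀ i, π i = π 0 + i) ∨ ∀ i, π i = π 0 - i := by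
  have hconst : ∀ d : ZMod n, π 1 = π 0 + d → (d = 1 ∨ d = -1) → ∀ i, π i = π 0 + d * i := by
    intro d hd hd1
    have hsucc : ∀ m : ℕ, π ((m : ZMod n) + 1) = π m + d := by
      intro m
      induction m with
      | zero => simpa using hd
      | succ m ih =>
        push_cast
        -- the other option would give `π (m + 2) = π m`
        have hback : π ((m : ZMod n) + 1 + 1) ≠ π ((m : ZMod n) + 1) - d := by
          rw [ih, add_sub_cancel_right]
          exact fun h => h2 (by linear_combination hinj h)
        rcases hstep ((m : ZMod n) + 1) with h | h <;> rcases hd1 with rfl | rfl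
        · exact h
        · exact (hback (by linear_combination h)).elim
        · exact (hback (by linear_combination h)).elim
        · linear_combination h
    have hcast : ∀ m : ℕ, π m = π 0 + d * m := by
      intro m
      induction m with
      | zero => simp
      | succ m ih => push_cast; rw [hsucc, ih]; ring
    intro i
    rw [← ZMod.natCast_zmod_val i, hcast]
  rcases hstep 0 with h | h
  · left
    simpa using hconst 1 (by simpa using h) (Or.inl rfl)
  · right
    simpa [sub_eq_add_neg] using hconst (-1) (by simpa [sub_eq_add_neg] using h) (Or.inr rfl)

namespace HalfArc

variable {V : Type*}

abbrev Setup.Cycle (S : Setup V) : Type _ := AltCycle S.Γ S.O (2 * S.r)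

instance (S : Setup V) : NeZero (2 * S.r) := ⟨by have := S.r_pos; omega⟩

def parity (S : Setup V) : ZMod (2 * S.r) →+* ZMod 2 :=
  ZMod.castHom (dvd_mul_right 2 S.r) (ZMod 2)

variable {S : Setup V}

lemma parity_surjective : Function.Surjective (parity S) := ZMod.castHom_surjective _

lemma parity_two : parity S 2 = 0 := by
  rw [map_ofNat]; rfl

lemma two_ne_zero_of_two_le (hr : 2 ≤ S.r) : (2 : ZMod (2 * S.r)) ≠ 0 := by
  intro h
  have h' : ((2 : ℕ) : ZMod (2 * S.r)) = 0 := by exact_mod_cast h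
  rw [ZMod.natCast_eq_zero_iff] at h'
  have := Nat.le_of_dvd (by norm_num) h'
  omega

lemma eq_zero_or_eq_r_of_add_self {s : ZMod (2 * S.r)} (hs : s + s = 0) :
    s = 0 ∨ s = S.r := by
  have hv := ZMod.natCast_zmod_val s
  have h2 : ((s.val + s.val : ℕ) : ZMod (2 * S.r)) = 0 := by push_cast; rw [hv]; exact hs
  rw [ZMod.natCast_eq_zero_iff] at h2
  obtain ⟨k, hk⟩ := h2
  have hlt : s.val < 2 * S.r := ZMod.val_lt s
  have hk1 : k ≤ 1 := by nlinarith [S.r_pos]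
  interval_cases k
  · left; rw [← hv, show s.val = 0 by omega]; simp
  · right; rw [← hv, show s.val = S.r by omega]

lemma natCast_r_ne_zero : (S.r : ZMod (2 * S.r)) ≠ 0 := by
  rw [Ne, ZMod.natCast_eq_zero_iff]
  intro h
  have := Nat.le_of_dvd S.r_pos h
  have := S.r_pos
  omega

lemma ncard_add_self_eq_le_two (k : ZMod (2 * S.r)) : {q | q + q = k}.ncard ≤ 2 := by
  rcases Set.eq_empty_or_nonempty {q | q + q = k} with h | ⟨q₀, hq₀⟩
  · simp [h]
  refine (Set.ncard_le_ncard (t := {q₀, q₀ + S.r}) (fun q hq => ?_) (Set.toFinite _)).trans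
    (Set.ncard_pair_le _ _)
  have hq' : q + q = k := hq
  have hq₀' : q₀ + q₀ = k := hq₀
  simp only [Set.mem_insert_iff, Set.mem_singleton_iff]
  rcases eq_zero_or_eq_r_of_add_self (s := q - q₀) (by linear_combination hq' - hq₀') with h | h
  · exact Or.inl (by linear_combination h)
  · exact Or.inr (by linear_combination h)

lemma addOrderOf_two : addOrderOf (2 : ZMod (2 * S.r)) = S.r := by
  have := ZMod.addOrderOf_coe 2 (n := 2 * S.r) (NeZero.ne _)
  rw [Nat.cast_ofNat] at this
  rw [this, Nat.gcd_eq_right (dvd_mul_right 2 S.r)]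
  omega

lemma addOrderOf_r : addOrderOf (S.r : ZMod (2 * S.r)) = 2 := by
  rw [ZMod.addOrderOf_coe _ (NeZero.ne _), Nat.gcd_eq_right (dvd_mul_left S.r 2),
    Nat.mul_div_cancel _ S.r_pos]

lemma add_self_eq_zero_of_mem_zmultiples_r {s : ZMod (2 * S.r)}
    (hs : s ∈ AddSubgroup.zmultiples (S.r : ZMod (2 * S.r))) : s + s = 0 := by
  obtain ⟨n, rfl⟩ := hs
  have hr2 : (S.r : ZMod (2 * S.r)) + S.r = 0 := by
    rw [← Nat.cast_add, ← two_mul, ZMod.natCast_self]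
  rw [← smul_add, hr2, smul_zero]

section AltCycle

variable {Γ : SimpleGraph V} {O : V → V → Prop} {n : ℕ} (c : AltCycle Γ O n)

lemma mem_cycEdges (i : ZMod n) : s(c.f i, c.f (i + 1)) ∈ cycEdges c := ⟨i, rfl⟩

lemma mem_cycVerts (i : ZMod n) : c.f i ∈ cycVerts c := ⟨i, rfl⟩

lemma suppOf_cycEdges : suppOf (cycEdges c) = cycVerts c := by
  ext v
  constructor
  · rintro ⟨e, ⟨i, rfl⟩, hv⟩
    rcases Sym2.mem_iff.mp hv with rfl | rfl
    exacts [mem_cycVerts c i, mem_cycVerts c (i + 1)]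
  · rintro ⟨i, rfl⟩
    exact ⟨_, mem_cycEdges c i, Sym2.mem_mk_left _ _⟩

lemma mk_mem_cycEdges_iff {x y : ZMod n} :
    s(c.f x, c.f y) ∈ cycEdges c ↔ y = x + 1 ∨ x = y + 1 := by
  constructor
  · rintro ⟨j, hj⟩
    rcases Sym2.eq_iff.mp hj with ⟨h1, h2⟩ | ⟨h1, h2⟩
    · left; rw [← c.inj h1, ← c.inj h2]
    · right; rw [← c.inj h1, ← c.inj h2]
  · rintro (rfl | rfl)
    · exact mem_cycEdges c x
    · rw [Sym2.eq_swap]; exact mem_cycEdges c y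

lemma eq_succ_or_eq_pred_of_mk_mem_cycEdges {i : ZMod n} {w : V}
    (h : s(c.f i, w) ∈ cycEdges c) : w = c.f (i + 1) ∨ w = c.f (i - 1) := by
  obtain ⟨k, hk⟩ := h
  rcases Sym2.eq_iff.mp hk with ⟨h1, h2⟩ | ⟨h1, h2⟩
  · left; rw [← h2, c.inj h1]
  · right; rw [← h1, ← c.inj h2, add_sub_cancel_right]

end AltCycle

def edgeStab (Γ : SimpleGraph V) (E : Set (Sym2 V)) : Subgroup (Γ ≃g Γ) where
  carrier := {g | Sym2.map g '' E = E}
  one_mem' := by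
    show Sym2.map id '' E = E
    rw [Sym2.map_id, Set.image_id]
  mul_mem' := by
    intro g h (hg : Sym2.map g '' E = E) (hh : Sym2.map h '' E = E)
    show Sym2.map (g ∘ h) '' E = E
    rw [Sym2.map_comp, Set.image_comp, hh, hg]
  inv_mem' := by
    intro g (hg : Sym2.map g '' E = E)
    show Sym2.map g.symm '' E = E
    conv_lhs => rw [← hg]
    rw [← Set.image_comp, ← Sym2.map_comp]
    simp

lemma mem_edgeStab {Γ : SimpleGraph V} {E : Set (Sym2 V)} {g : Γ ≃g Γ} :
    g ∈ edgeStab Γ E ↔ Sym2.map g '' E = E := Iff.rfl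

lemma suppOf_image (f : V → V) (E : Set (Sym2 V)) :
    suppOf (Sym2.map f '' E) = f '' suppOf E := by
  ext v
  constructor
  · rintro ⟨_, ⟨e, he, rfl⟩, hv⟩
    obtain ⟨a, ha, rfl⟩ := Sym2.mem_map.mp hv
    exact ⟨a, ⟨e, he, ha⟩, rfl⟩
  · rintro ⟨a, ⟨e, he, ha⟩, rfl⟩
    exact ⟨_, ⟨e, he, rfl⟩, Sym2.mem_map.mpr ⟨a, ha, rfl⟩⟩

lemma O_map_iff {g : S.Γ ≃g S.Γ} (hg : g ∈ S.G) (u v : V) : S.O (g u) (g v) ↔ S.O u v :=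
  ⟨fun h => by simpa using S.O_inv _ (S.G.inv_mem hg) h, fun h => S.O_inv g hg h⟩

def AltCycle.map (c : S.Cycle) (g : S.Γ ≃g S.Γ) (hg : g ∈ S.G) : S.Cycle where
  f i := g (c.f i)
  inj := g.injective.comp c.inj
  adj i := g.map_adj_iff.mpr (c.adj i)
  alt i := by simpa only [O_map_iff hg] using c.alt i

lemma cycEdges_map (c : S.Cycle) {g : S.Γ ≃g S.Γ} (hg : g ∈ S.G) :
    cycEdges (c.map g hg) = Sym2.map g '' cycEdges c := by
  rw [cycEdges, cycEdges, ← Set.range_comp]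
  rfl

lemma isAltEdgeSet_image {E : Set (Sym2 V)} (hE : IsAltEdgeSet S.Γ S.O (2 * S.r) E)
    {g : S.Γ ≃g S.Γ} (hg : g ∈ S.G) : IsAltEdgeSet S.Γ S.O (2 * S.r) (Sym2.map g '' E) := by
  obtain ⟨c, rfl⟩ := hE
  exact ⟨c.map g hg, cycEdges_map c hg⟩

lemma exists_orient_iff_parity (c : S.Cycle) :
    ∃ ε : ZMod 2, ∀ i, S.O (c.f i) (c.f (i + 1)) ↔ parity S i = ε := by
  classical
  have hflip : ∀ i, S.O (c.f (i + 1)) (c.f (i + 1 + 1)) ↔ ¬ S.O (c.f i) (c.f (i + 1)) := by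
    intro i
    rw [S.O_choice (c.adj (i + 1)), add_assoc, one_add_one_eq_two]
    exact not_congr (c.alt i).symm
  set ε : ZMod 2 := if S.O (c.f 0) (c.f (0 + 1)) then 0 else 1
  have hnat : ∀ m : ℕ, S.O (c.f m) (c.f ((m : ZMod (2 * S.r)) + 1)) ↔ (m : ZMod 2) = ε := by
    intro m
    induction m with
    | zero => by_cases h : S.O (c.f 0) (c.f (0 + 1)) <;> simp [ε]
    | succ m ih =>
      push_cast
      rw [hflip, ih]
      exact (by decide : ∀ x e : ZMod 2, ¬ x = e ↔ x + 1 = e) _ _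
  refine ⟨ε, fun i => ?_⟩
  have hi := hnat i.val
  rwa [ZMod.natCast_zmod_val, ← map_natCast (parity S), ZMod.natCast_zmod_val] at hi

section AttachmentSets

def cyclesAt (S : Setup V) (v : V) : Set (Set (Sym2 V)) :=
  {E | IsAltEdgeSet S.Γ S.O (2 * S.r) E ∧ v ∈ suppOf E}

def attSet (S : Setup V) (v : V) : Set V := ⋂ E ∈ cyclesAt S v, suppOf E

lemma mem_cyclesAt (c : S.Cycle) {v : V} (hv : v ∈ cycVerts c) : cycEdges c ∈ cyclesAt S v :=
  ⟨⟨c, rfl⟩, by rwa [suppOf_cycEdges]⟩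

lemma ncard_cyclesAt (v : V) : (cyclesAt S v).ncard = 2 := S.alt_cover v

lemma cyclesAt_eq_pair {v : V} {E₁ E₂ : Set (Sym2 V)} (hne : E₁ ≠ E₂)
    (h₁ : E₁ ∈ cyclesAt S v) (h₂ : E₂ ∈ cyclesAt S v) : cyclesAt S v = {E₁, E₂} := by
  have := S.finite
  refine (Set.eq_of_subset_of_ncard_le ?_ ?_ (Set.toFinite _)).symm
  · rintro E (rfl | rfl) <;> assumption
  · rw [ncard_cyclesAt, Set.ncard_pair hne]

lemma exists_cyclesAt_eq_pair (v : V) : ∃ E₁ E₂, E₁ ≠ E₂ ∧ cyclesAt S v = {E₁, E₂} :=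
  Set.ncard_eq_two.mp (ncard_cyclesAt v)

lemma mem_attSet_self (v : V) : v ∈ attSet S v :=
  Set.mem_iInter₂.mpr fun _ hE => hE.2

lemma attSet_subset {v : V} {E : Set (Sym2 V)} (hE : E ∈ cyclesAt S v) :
    attSet S v ⊆ suppOf E :=
  fun _ hu => Set.mem_iInter₂.mp hu E hE

lemma attSet_subset_cycVerts (c : S.Cycle) {v : V} (hv : v ∈ cycVerts c) :
    attSet S v ⊆ cycVerts c := by
  rw [← suppOf_cycEdges]
  exact attSet_subset (mem_cyclesAt c hv)

lemma cyclesAt_eq_of_mem_attSet {u v : V} (hu : u ∈ attSet S v) :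
    cyclesAt S u = cyclesAt S v := by
  have := S.finite
  have hsub : cyclesAt S v ⊆ cyclesAt S u := fun E hE => ⟨hE.1, attSet_subset hE hu⟩
  exact (Set.eq_of_subset_of_ncard_le hsub (by rw [ncard_cyclesAt, ncard_cyclesAt])
    (Set.toFinite _)).symm

lemma attSet_eq_of_mem {u v : V} (hu : u ∈ attSet S v) : attSet S u = attSet S v := by
  rw [attSet, attSet, cyclesAt_eq_of_mem_attSet hu]

lemma attSet_eq_inter {v : V} {E₁ E₂ : Set (Sym2 V)} (h : cyclesAt S v = {E₁, E₂}) :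
    attSet S v = suppOf E₁ ∩ suppOf E₂ := by
  rw [attSet, h, Set.biInter_pair]

lemma cyclesAt_map {g : S.Γ ≃g S.Γ} (hg : g ∈ S.G) (v : V) :
    cyclesAt S (g v) = (Sym2.map g '' ·) '' cyclesAt S v := by
  ext E
  constructor
  · rintro ⟨hE, hv⟩
    refine ⟨Sym2.map (g⁻¹ : S.Γ ≃g S.Γ) '' E, ⟨isAltEdgeSet_image hE (S.G.inv_mem hg), ?_⟩, ?_⟩
    · rw [suppOf_image]
      exact ⟨g v, hv, by simp⟩
    · dsimp only
      rw [← Set.image_comp, ← Sym2.map_comp]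
      simp
  · rintro ⟨F, ⟨hF, hvF⟩, rfl⟩
    exact ⟨isAltEdgeSet_image hF hg, by rw [suppOf_image]; exact Set.mem_image_of_mem g hvF⟩

lemma attSet_map {g : S.Γ ≃g S.Γ} (hg : g ∈ S.G) (v : V) :
    attSet S (g v) = g '' attSet S v := by
  obtain ⟨E₁, E₂, -, hpair⟩ := exists_cyclesAt_eq_pair (S := S) v
  have hpair' : cyclesAt S (g v) = {Sym2.map g '' E₁, Sym2.map g '' E₂} := by
    rw [cyclesAt_map hg, hpair, Set.image_pair]
  rw [attSet_eq_inter hpair', attSet_eq_inter hpair, suppOf_image, suppOf_image,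
    Set.image_inter g.injective]

lemma isAttSet_attSet (v : V) : IsAttSet S.Γ S.O (2 * S.r) (attSet S v) := by
  obtain ⟨E₁, E₂, hne, hpair⟩ := exists_cyclesAt_eq_pair (S := S) v
  have h₁ : E₁ ∈ cyclesAt S v := hpair ▸ Set.mem_insert E₁ _
  have h₂ : E₂ ∈ cyclesAt S v := hpair ▸ Set.mem_insert_of_mem _ rfl
  obtain ⟨⟨c₁, rfl⟩, hv₁⟩ := h₁
  obtain ⟨⟨c₂, rfl⟩, hv₂⟩ := h₂
  rw [suppOf_cycEdges] at hv₁ hv₂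
  refine ⟨c₁, c₂, hne, ⟨v, hv₁, hv₂⟩, ?_⟩
  rw [attSet_eq_inter hpair, suppOf_cycEdges, suppOf_cycEdges]

lemma ncard_attSet (v : V) : (attSet S v).ncard = S.att :=
  S.att_eq _ (isAttSet_attSet v)

end AttachmentSets

section Neighbours

lemma nonempty_cycle : Nonempty S.Cycle := by
  obtain ⟨v⟩ := S.conn.nonempty
  obtain ⟨E, ⟨c, -⟩, -⟩ :=
    Set.nonempty_of_ncard_ne_zero (s := cyclesAt S v) (by rw [ncard_cyclesAt]; norm_num)
  exact ⟨c⟩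

lemma exists_isAltEdgeSet_mem {u v : V} (h : S.Γ.Adj u v) :
    ∃ E, IsAltEdgeSet S.Γ S.O (2 * S.r) E ∧ s(u, v) ∈ E := by
  obtain ⟨c⟩ := nonempty_cycle (S := S)
  obtain ⟨x, y, hxy, hmem⟩ : ∃ x y, S.O x y ∧ s(x, y) ∈ cycEdges c := by
    by_cases h0 : S.O (c.f 0) (c.f (0 + 1))
    · exact ⟨_, _, h0, mem_cycEdges c 0⟩
    · refine ⟨_, _, (S.O_choice (c.adj 0).symm).mpr h0, ?_⟩
      rw [Sym2.eq_swap]; exact mem_cycEdges c 0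
  -- `G` is transitive on arcs, so every arc is the image of the arc `(x, y)` of `c`
  have harc : ∀ a b, S.O a b → ∃ E, IsAltEdgeSet S.Γ S.O (2 * S.r) E ∧ s(a, b) ∈ E := by
    intro a b hab
    obtain ⟨g, hg, rfl, rfl⟩ := S.O_orbit hxy hab
    exact ⟨_, isAltEdgeSet_image ⟨c, rfl⟩ hg, ⟨_, hmem, rfl⟩⟩
  by_cases huv : S.O u v
  · exact harc u v huv
  · obtain ⟨E, hE, hmem⟩ := harc v u ((S.O_choice h.symm).mpr huv)
    exact ⟨E, hE, by rwa [Sym2.eq_swap]⟩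

lemma neighborSet_subset {c₁ c₂ : S.Cycle} (hne : cycEdges c₁ ≠ cycEdges c₂)
    {i j : ZMod (2 * S.r)} {v : V} (h₁ : c₁.f i = v) (h₂ : c₂.f j = v) :
    S.Γ.neighborSet v ⊆ {c₁.f (i + 1), c₁.f (i - 1)} ∪ {c₂.f (j + 1), c₂.f (j - 1)} := by
  have hpair : cyclesAt S v = {cycEdges c₁, cycEdges c₂} :=
    cyclesAt_eq_pair hne (mem_cyclesAt c₁ (h₁ ▸ mem_cycVerts c₁ i))
      (mem_cyclesAt c₂ (h₂ ▸ mem_cycVerts c₂ j))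
  intro w hw
  obtain ⟨E, hE, hvw⟩ := exists_isAltEdgeSet_mem hw
  have hEv : E ∈ cyclesAt S v := ⟨hE, _, hvw, Sym2.mem_mk_left _ _⟩
  rw [hpair] at hEv
  rcases hEv with rfl | rfl
  · subst h₁; exact Or.inl (eq_succ_or_eq_pred_of_mk_mem_cycEdges c₁ hvw)
  · subst h₂; exact Or.inr (eq_succ_or_eq_pred_of_mk_mem_cycEdges c₂ hvw)

/-- At an endpoint of a shared edge, two distinct cycles would provide at most three of its four
neighbours. -/
lemma cycEdges_eq_of_mem {c₁ c₂ : S.Cycle} {e : Sym2 V} (h₁ : e ∈ cycEdges c₁)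
    (h₂ : e ∈ cycEdges c₂) : cycEdges c₁ = cycEdges c₂ := by
  by_contra hne
  obtain ⟨i, rfl⟩ := h₁
  obtain ⟨j, hj⟩ : c₁.f i ∈ cycVerts c₂ := by
    rw [← suppOf_cycEdges]; exact ⟨_, h₂, Sym2.mem_mk_left _ _⟩
  set P₁ : Set V := {c₁.f (i + 1), c₁.f (i - 1)}
  set P₂ : Set V := {c₂.f (j + 1), c₂.f (j - 1)}
  have hshared : c₁.f (i + 1) ∈ P₁ ∩ P₂ := by
    refine ⟨Or.inl rfl, eq_succ_or_eq_pred_of_mk_mem_cycEdges c₂ ?_⟩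
    rw [hj]; exact h₂
  have hunion := Set.ncard_union_add_ncard_inter P₁ P₂ (Set.toFinite _) (Set.toFinite _)
  have h4 : (S.Γ.neighborSet (c₁.f i)).ncard ≤ (P₁ ∪ P₂).ncard :=
    Set.ncard_le_ncard (neighborSet_subset hne rfl hj) (Set.toFinite _)
  have hinter := (Set.ncard_pos (Set.toFinite _)).mpr ⟨_, hshared⟩
  have hP₁ : P₁.ncard ≤ 2 := Set.ncard_pair_le _ _
  have hP₂ : P₂.ncard ≤ 2 := Set.ncard_pair_le _ _
  rw [S.tetra] at h4
  omega

lemma exists_out_and_in (v : V) : (∃ w, S.O v w) ∧ ∃ w, S.O w v := by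
  have key : ∀ a b, S.O a b → (∃ w, S.O v w) ∧ ∃ w, S.O w v := by
    intro a b hab
    obtain ⟨g, hg, hga⟩ := S.hat.1 a v
    obtain ⟨g', hg', hg'b⟩ := S.hat.1 b v
    exact ⟨⟨g b, hga ▸ S.O_inv g hg hab⟩, ⟨g' a, hg'b ▸ S.O_inv g' hg' hab⟩⟩
  obtain ⟨w, hw⟩ : (S.Γ.neighborSet v).Nonempty :=
    Set.nonempty_of_ncard_ne_zero (by rw [S.tetra]; norm_num)
  by_cases h : S.O v w
  · exact key v w h
  · exact key w v ((S.O_choice hw.symm).mpr h)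

lemma O_succ_iff_O_pred (c : S.Cycle) (i : ZMod (2 * S.r)) :
    S.O (c.f i) (c.f (i + 1)) ↔ S.O (c.f i) (c.f (i - 1)) := by
  have halt := c.alt (i - 1)
  have hadj := c.adj (i - 1)
  rw [sub_add_cancel, show i - 1 + 2 = i + 1 by ring] at halt
  rw [sub_add_cancel] at hadj
  rw [S.O_choice (c.adj i), S.O_choice hadj.symm, ← halt]

/-- Otherwise the common vertex would be a source or a sink of the orientation. -/
lemma O_succ_iff_not_O_succ {c₁ c₂ : S.Cycle} (hne : cycEdges c₁ ≠ cycEdges c₂)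
    {i j : ZMod (2 * S.r)} (hv : c₁.f i = c₂.f j) :
    S.O (c₁.f i) (c₁.f (i + 1)) ↔ ¬ S.O (c₂.f j) (c₂.f (j + 1)) := by
  suffices hsame : ¬ (S.O (c₁.f i) (c₁.f (i + 1)) ↔ S.O (c₂.f j) (c₂.f (j + 1))) by tauto
  intro hsame
  have hconst : ∀ w ∈ S.Γ.neighborSet (c₁.f i),
      (S.O (c₁.f i) w ↔ S.O (c₁.f i) (c₁.f (i + 1))) := by
    intro w hw
    rcases neighborSet_subset hne rfl hv.symm hw with (rfl | rfl) | (rfl | rfl)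
    · rfl
    · exact (O_succ_iff_O_pred c₁ i).symm
    · rw [hsame, hv]
    · rw [hsame, hv, O_succ_iff_O_pred c₂ j]
  obtain ⟨⟨w₁, hw₁⟩, ⟨w₂, hw₂⟩⟩ := exists_out_and_in (S := S) (c₁.f i)
  have hout := (hconst w₂ (S.O_adj hw₂).symm).mpr ((hconst w₁ (S.O_adj hw₁)).mp hw₁)
  exact (S.O_choice (S.O_adj hw₂)).mp hw₂ hout

end Neighbours

section Dihedral

lemma rotation_or_reflection {Γ : SimpleGraph V} {O : V → V → Prop} {n : ℕ} [NeZero n]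
    (h2 : (2 : ZMod n) ≠ 0) (c : AltCycle Γ O n) {f : V → V} (hf : Function.Injective f)
    (hfix : Sym2.map f '' cycEdges c = cycEdges c) :
    (∃ k, ∀ i, f (c.f i) = c.f (i + k)) ∨ ∃ k, ∀ i, f (c.f i) = c.f (k - i) := by
  have hex : ∀ i, ∃ j, f (c.f i) = c.f j := by
    intro i
    have : f (c.f i) ∈ cycVerts c := by
      rw [← suppOf_cycEdges, ← hfix, suppOf_image, suppOf_cycEdges]
      exact Set.mem_image_of_mem f (mem_cycVerts c i)
    obtain ⟨j, hj⟩ := this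
    exact ⟨j, hj.symm⟩
  choose π hπ using hex
  have hinj : Function.Injective π := fun i j h => c.inj (hf (by rw [hπ, hπ, h]))
  have hstep : ∀ i, π (i + 1) = π i + 1 ∨ π (i + 1) = π i - 1 := by
    intro i
    have hmem : Sym2.map f s(c.f i, c.f (i + 1)) ∈ cycEdges c :=
      hfix ▸ Set.mem_image_of_mem _ (mem_cycEdges c i)
    rw [Sym2.map_mk, hπ, hπ, mk_mem_cycEdges_iff] at hmem
    rcases hmem with h | h
    · exact Or.inl h
    · exact Or.inr (by rw [h]; ring)
  rcases ZMod.eq_add_or_eq_sub_of_succ h2 hinj hstep with h | h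
  · exact Or.inl ⟨π 0, fun i => by rw [hπ, h, add_comm]⟩
  · exact Or.inr ⟨π 0, fun i => by rw [hπ, h]⟩

lemma parity_eq_zero_of_rotation {g : S.Γ ≃g S.Γ} (hg : g ∈ S.G) (c : S.Cycle)
    {k : ZMod (2 * S.r)} (hk : ∀ i, g (c.f i) = c.f (i + k)) : parity S k = 0 := by
  obtain ⟨ε, hε⟩ := exists_orient_iff_parity c
  obtain ⟨i₀, hi₀⟩ := parity_surjective (S := S) ε
  have hO := S.O_inv g hg ((hε i₀).mpr hi₀)
  rw [hk, hk, add_right_comm, hε, map_add, hi₀] at hO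
  linear_combination hO

lemma parity_eq_zero_of_reflection {g : S.Γ ≃g S.Γ} (hg : g ∈ S.G) (c : S.Cycle)
    {k : ZMod (2 * S.r)} (hk : ∀ i, g (c.f i) = c.f (k - i)) : parity S k = 0 := by
  obtain ⟨ε, hε⟩ := exists_orient_iff_parity c
  obtain ⟨i₀, hi₀⟩ := parity_surjective (S := S) ε
  have hO := S.O_inv g hg ((hε i₀).mpr hi₀)
  rw [hk, hk, show k - (i₀ + 1) = k - i₀ - 1 by ring, ← O_succ_iff_O_pred, hε, map_sub,
    hi₀] at hO
  have h2 : (2 : ZMod 2) = 0 := rfl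
  linear_combination hO + ε * h2

lemma exists_rotation (hr : 2 ≤ S.r) (c : S.Cycle) {e : ZMod (2 * S.r)}
    (he : parity S e = 0) :
    ∃ h ∈ S.G, h ∈ edgeStab S.Γ (cycEdges c) ∧ ∀ i, h (c.f i) = c.f (i + e) := by
  obtain ⟨ε, hε⟩ := exists_orient_iff_parity c
  obtain ⟨i₀, hi₀⟩ := parity_surjective (S := S) ε
  have hO₁ : S.O (c.f i₀) (c.f (i₀ + 1)) := (hε i₀).mpr hi₀
  have hO₂ : S.O (c.f (i₀ + e)) (c.f (i₀ + e + 1)) :=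
    (hε _).mpr (by rw [map_add, hi₀, he, add_zero])
  obtain ⟨h, hh, h0, h1⟩ := S.O_orbit hO₁ hO₂
  have hfix : h ∈ edgeStab S.Γ (cycEdges c) := by
    rw [mem_edgeStab, ← cycEdges_map c hh]
    refine cycEdges_eq_of_mem (e := s(c.f (i₀ + e), c.f (i₀ + e + 1))) ?_ (mem_cycEdges c _)
    rw [cycEdges_map]
    exact ⟨_, mem_cycEdges c i₀, by rw [Sym2.map_mk, h0, h1]⟩
  refine ⟨h, hh, hfix, ?_⟩
  rcases rotation_or_reflection (two_ne_zero_of_two_le hr) c h.injective hfix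
    with ⟨k, hk⟩ | ⟨k, hk⟩
  · have : i₀ + k = i₀ + e := c.inj (by rw [← hk, h0])
    rwa [add_left_cancel this] at hk
  · have e1 : k - i₀ = i₀ + e := c.inj (by rw [← hk, h0])
    have e2 : k - (i₀ + 1) = i₀ + e + 1 := c.inj (by rw [← hk, h1])
    exact absurd (by linear_combination e1 - e2) (two_ne_zero_of_two_le hr)

lemma ncard_le_two_of_reflection (c : S.Cycle) {f : V → V} {k : ZMod (2 * S.r)}
    (hk : ∀ i, f (c.f i) = c.f (k - i)) {B : Set (ZMod (2 * S.r))}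
    (hB : ∀ q ∈ B, f (c.f q) = c.f q) : B.ncard ≤ 2 := by
  have hsub : B ⊆ {q | q + q = k} := fun q hq => by
    have := c.inj ((hk q).symm.trans (hB q hq))
    show q + q = k
    linear_combination -this
  exact (Set.ncard_le_ncard hsub (Set.toFinite _)).trans (ncard_add_self_eq_le_two k)

lemma fixes_of_three_le_ncard (hr : 2 ≤ S.r) (c : S.Cycle) {f : V → V}
    (hf : Function.Injective f) (hfix : Sym2.map f '' cycEdges c = cycEdges c)
    {B : Set (ZMod (2 * S.r))} (hB : ∀ q ∈ B, f (c.f q) = c.f q) (h3 : 3 ≤ B.ncard) :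
    ∀ i, f (c.f i) = c.f i := by
  rcases rotation_or_reflection (two_ne_zero_of_two_le hr) c hf hfix with ⟨k, hk⟩ | ⟨k, hk⟩
  · obtain ⟨q, hq⟩ := Set.nonempty_of_ncard_ne_zero (by omega : B.ncard ≠ 0)
    have hk0 : k = 0 := by simpa using c.inj ((hk q).symm.trans (hB q hq))
    simpa [hk0] using hk
  · have := ncard_le_two_of_reflection c hk hB
    omega

lemma pow_rotation {c : S.Cycle} {h : S.Γ ≃g S.Γ} {e : ZMod (2 * S.r)}
    (hrot : ∀ i, h (c.f i) = c.f (i + e)) (n : ℕ) (i : ZMod (2 * S.r)) :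
    (h ^ n) (c.f i) = c.f (i + n • e) := by
  induction n generalizing i with
  | zero => simp
  | succ n ih =>
    rw [pow_succ, RelIso.mul_apply, hrot, ih, succ_nsmul]
    congr 1
    abel

end Dihedral

section Positions

def attPos (c : S.Cycle) (j : ZMod (2 * S.r)) : Set (ZMod (2 * S.r)) :=
  c.f ⁻¹' attSet S (c.f j)

def evenStab (c : S.Cycle) (j : ZMod (2 * S.r)) : AddSubgroup (ZMod (2 * S.r)) :=
  AddAction.stabilizer (ZMod (2 * S.r)) (attPos c j) ⊓ (parity S).toAddMonoidHom.ker

def IsMixed (c : S.Cycle) (j : ZMod (2 * S.r)) : Prop :=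
  ∃ i ∈ attPos c j, parity S i ≠ parity S j

variable (c : S.Cycle)

lemma mem_attPos_self (j : ZMod (2 * S.r)) : j ∈ attPos c j := mem_attSet_self _

lemma attPos_eq_of_mem {i j : ZMod (2 * S.r)} (h : i ∈ attPos c j) :
    attPos c i = attPos c j := by
  rw [attPos, attPos, attSet_eq_of_mem h]

lemma ncard_attPos (j : ZMod (2 * S.r)) : (attPos c j).ncard = S.att := by
  rw [attPos, Set.ncard_preimage_of_injective_subset_range c.inj
    (attSet_subset_cycVerts c (mem_cycVerts c j)), ncard_attSet]

lemma attPos_add_of_rotation {h : S.Γ ≃g S.Γ} (hh : h ∈ S.G) {s : ZMod (2 * S.r)}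
    (hrot : ∀ i, h (c.f i) = c.f (i + s)) (j : ZMod (2 * S.r)) :
    attPos c (j + s) = s +ᵥ attPos c j := by
  ext i
  have hi : c.f i = h (c.f (-s + i)) := by rw [hrot]; congr 1; abel
  rw [Set.mem_vadd_set_iff_neg_vadd_mem, vadd_eq_add, attPos, attPos, Set.mem_preimage,
    Set.mem_preimage, ← hrot, attSet_map hh, hi, h.injective.mem_set_image]

lemma attPos_add (hr : 2 ≤ S.r) {s : ZMod (2 * S.r)} (hs : parity S s = 0)
    (j : ZMod (2 * S.r)) : attPos c (j + s) = s +ᵥ attPos c j :=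
  let ⟨_, hh, _, hrot⟩ := exists_rotation hr c hs
  attPos_add_of_rotation c hh hrot j

lemma mem_evenStab_iff (hr : 2 ≤ S.r) {j s : ZMod (2 * S.r)} :
    s ∈ evenStab c j ↔ parity S s = 0 ∧ j + s ∈ attPos c j := by
  simp only [evenStab, AddSubgroup.mem_inf, AddAction.mem_stabilizer_iff, AddMonoidHom.mem_ker,
    RingHom.toAddMonoidHom_eq_coe, AddMonoidHom.coe_coe]
  constructor
  · rintro ⟨hstab, hs⟩
    refine ⟨hs, ?_⟩
    rw [← hstab, add_comm]
    exact Set.vadd_mem_vadd_set (mem_attPos_self c j)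
  · rintro ⟨hs, hmem⟩
    exact ⟨by rw [← attPos_add c hr hs, attPos_eq_of_mem c hmem], hs⟩

lemma evenStab_eq_of_mem {i j : ZMod (2 * S.r)} (h : i ∈ attPos c j) :
    evenStab c i = evenStab c j := by
  rw [evenStab, evenStab, attPos_eq_of_mem c h]

lemma evenStab_add (hr : 2 ≤ S.r) {s : ZMod (2 * S.r)} (hs : parity S s = 0)
    (j : ZMod (2 * S.r)) : evenStab c (j + s) = evenStab c j := by
  ext t
  rw [mem_evenStab_iff c hr, mem_evenStab_iff c hr, attPos_add c hr hs,
    Set.mem_vadd_set_iff_neg_vadd_mem, vadd_eq_add, show -s + (j + s + t) = j + t by abel]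

lemma sameParity_eq_vadd_evenStab (hr : 2 ≤ S.r) (j : ZMod (2 * S.r)) :
    {i ∈ attPos c j | parity S i = parity S j} = j +ᵥ (evenStab c j : Set (ZMod (2 * S.r))) := by
  ext i
  constructor
  · rintro ⟨hi, hpar⟩
    refine ⟨i - j, (mem_evenStab_iff c hr).mpr ⟨by rw [map_sub, hpar, sub_self], ?_⟩, ?_⟩
    · rwa [add_sub_cancel]
    · exact add_sub_cancel j i
  · rintro ⟨s, hs, rfl⟩
    obtain ⟨hs0, hmem⟩ := (mem_evenStab_iff c hr).mp hs
    exact ⟨hmem, show parity S (j + s) = _ by rw [map_add, hs0, add_zero]⟩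

lemma ncard_sameParity (hr : 2 ≤ S.r) (j : ZMod (2 * S.r)) :
    {i ∈ attPos c j | parity S i = parity S j}.ncard = Nat.card (evenStab c j) := by
  rw [sameParity_eq_vadd_evenStab c hr, Set.ncard_vadd_set, ← Nat.card_coe_set_eq,
    SetLike.coe_sort_coe]

lemma card_evenStab_le (hr : 2 ≤ S.r) (j : ZMod (2 * S.r)) :
    Nat.card (evenStab c j) ≤ S.att := by
  rw [← ncard_sameParity c hr, ← ncard_attPos c j]
  exact Set.ncard_le_ncard (fun i hi => hi.1) (Set.toFinite _)

lemma card_evenStab_of_not_isMixed (hr : 2 ≤ S.r) {j : ZMod (2 * S.r)} (h : ¬ IsMixed c j) :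
    Nat.card (evenStab c j) = S.att := by
  rw [← ncard_sameParity c hr, ← ncard_attPos c j]
  congr 1
  ext i
  exact ⟨fun hi => hi.1, fun hi => ⟨hi, by_contra fun hne => h ⟨i, hi, hne⟩⟩⟩

lemma card_evenStab_of_isMixed (hr : 2 ≤ S.r) {j : ZMod (2 * S.r)} (h : IsMixed c j) :
    2 * Nat.card (evenStab c j) = S.att := by
  obtain ⟨i, hi, hpar⟩ := h
  have hsplit : attPos c j = {k ∈ attPos c j | parity S k = parity S j} ∪
      {k ∈ attPos c i | parity S k = parity S i} := by
    rw [attPos_eq_of_mem c hi]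
    ext k
    constructor
    · intro hk
      by_cases hkp : parity S k = parity S j
      · exact Or.inl ⟨hk, hkp⟩
      · exact Or.inr ⟨hk, zmod2_eq_of_ne_of_ne hkp hpar⟩
    · rintro (hk | hk)
      exacts [hk.1, hk.1]
  have hdisj : Disjoint {k ∈ attPos c j | parity S k = parity S j}
      {k ∈ attPos c i | parity S k = parity S i} :=
    Set.disjoint_left.mpr fun k hkj hki => hpar (hki.2.symm.trans hkj.2)
  rw [← ncard_attPos c j, hsplit, Set.ncard_union_eq hdisj (Set.toFinite _) (Set.toFinite _),
    ncard_sameParity c hr, ncard_sameParity c hr, evenStab_eq_of_mem c hi, two_mul]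

lemma evenStab_eq (hr : 2 ≤ S.r) (j j' : ZMod (2 * S.r)) : evenStab c j = evenStab c j' := by
  have hpar : ∀ {i i'}, parity S i = parity S i' → evenStab c i = evenStab c i' := by
    intro i i' h
    have := evenStab_add c hr (s := i' - i) (by rw [map_sub, h, sub_self]) i
    rwa [add_sub_cancel, eq_comm] at this
  by_cases hp : parity S j = parity S j'
  · exact hpar hp
  by_cases hm : IsMixed c j
  · obtain ⟨i, hi, hip⟩ := hm
    rw [← evenStab_eq_of_mem c hi]
    exact hpar (zmod2_eq_of_ne_of_ne hip (Ne.symm hp))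
  by_cases hm' : IsMixed c j'
  · obtain ⟨i, hi, hip⟩ := hm'
    rw [← evenStab_eq_of_mem c hi]
    exact hpar (zmod2_eq_of_ne_of_ne hp hip)
  exact IsAddCyclic.addSubgroup_eq_of_card_eq
    (by rw [card_evenStab_of_not_isMixed c hr hm, card_evenStab_of_not_isMixed c hr hm'])

end Positions
section BlockAction

lemma mem_attPos_of_image_eq {g : S.Γ ≃g S.Γ} (c : S.Cycle) {i j : ZMod (2 * S.r)}
    (hgj : g (c.f j) = c.f i) (hB : g '' attSet S (c.f j) = attSet S (c.f j)) :
    i ∈ attPos c j := by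
  show c.f i ∈ attSet S (c.f j)
  rw [← hgj, ← hB]
  exact Set.mem_image_of_mem g (mem_attSet_self _)

lemma mem_evenStab_of_rotation (hr : 2 ≤ S.r) {g : S.Γ ≃g S.Γ} (hg : g ∈ S.G) (c : S.Cycle)
    {κ : ZMod (2 * S.r)} (hrot : ∀ i, g (c.f i) = c.f (i + κ)) {j : ZMod (2 * S.r)}
    (hB : g '' attSet S (c.f j) = attSet S (c.f j)) : κ ∈ evenStab c j :=
  (mem_evenStab_iff c hr).mpr
    ⟨parity_eq_zero_of_rotation hg c hrot, mem_attPos_of_image_eq c (hrot j) hB⟩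

lemma image_attSet_of_rotation (hr : 2 ≤ S.r) {g : S.Γ ≃g S.Γ} (hg : g ∈ S.G) (c : S.Cycle)
    {κ : ZMod (2 * S.r)} (hrot : ∀ i, g (c.f i) = c.f (i + κ)) {j₀ : ZMod (2 * S.r)}
    (hκ : κ ∈ evenStab c j₀) (j : ZMod (2 * S.r)) :
    g '' attSet S (c.f j) = attSet S (c.f j) := by
  rw [evenStab_eq c hr j₀ j, mem_evenStab_iff c hr] at hκ
  rw [← attSet_map hg, hrot]
  exact attSet_eq_of_mem hκ.2

/-- A reflection `i ↦ k - i` fixing all attachment sets on `c` would put `k - 2 j` into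
`evenStab c j = evenStab c 0` for every `j`, hence `2 ∈ evenStab c 0`; but then the attachment
sets would have at least `r` elements. -/
lemma exists_rotation_of_image_attSet (hr : 2 ≤ S.r) (har : S.att < S.r) {g : S.Γ ≃g S.Γ}
    (hg : g ∈ S.G) (c : S.Cycle) (hfix : g ∈ edgeStab S.Γ (cycEdges c))
    (hattSets : ∀ j, g '' attSet S (c.f j) = attSet S (c.f j)) :
    ∃ k ∈ evenStab c 0, ∀ i, g (c.f i) = c.f (i + k) := by
  rcases rotation_or_reflection (two_ne_zero_of_two_le hr) c g.injective hfix
    with ⟨k, hk⟩ | ⟨k, hk⟩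
  · exact ⟨k, mem_evenStab_of_rotation hr hg c hk (hattSets 0), hk⟩
  exfalso
  have hk0 := parity_eq_zero_of_reflection hg c hk
  have hmem : ∀ j, k - 2 * j ∈ evenStab c 0 := by
    intro j
    rw [evenStab_eq c hr 0 j, mem_evenStab_iff c hr, map_sub, hk0, map_mul, parity_two, zero_mul,
      sub_zero, show j + (k - 2 * j) = k - j by ring]
    exact ⟨rfl, mem_attPos_of_image_eq c (hk j) (hattSets j)⟩
  have h2 : (2 : ZMod (2 * S.r)) ∈ evenStab c 0 := by
    have := sub_mem (hmem 0) (hmem 1)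
    rwa [show k - 2 * 0 - (k - 2 * 1) = 2 by ring] at this
  have := (AddSubgroup.card_le_of_le (AddSubgroup.zmultiples_le.mpr h2)).trans
    (card_evenStab_le c hr 0)
  rw [Nat.card_zmultiples, addOrderOf_two] at this
  omega

lemma mem_edgeStab_of_neighbor {X Y : S.Cycle} (hXY : cycEdges X ≠ cycEdges Y) {v : V}
    (hvX : v ∈ cycVerts X) (hvY : v ∈ cycVerts Y) {g : S.Γ ≃g S.Γ} (hg : g ∈ S.G)
    (hX : g ∈ edgeStab S.Γ (cycEdges X)) (hA : g '' attSet S v = attSet S v) :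
    g ∈ edgeStab S.Γ (cycEdges Y) := by
  have hpair := cyclesAt_eq_pair hXY (mem_cyclesAt X hvX) (mem_cyclesAt Y hvY)
  have hgv : g v ∈ attSet S v := hA ▸ Set.mem_image_of_mem g (mem_attSet_self v)
  have hmem : Sym2.map g '' cycEdges Y ∈ cyclesAt S (g v) := by
    rw [cyclesAt_map hg]
    exact Set.mem_image_of_mem _ (mem_cyclesAt Y hvY)
  rw [cyclesAt_eq_of_mem_attSet hgv, hpair] at hmem
  rcases hmem with h | h
  · rw [mem_edgeStab] at hX
    rw [← hX] at h
    exact absurd (Set.image_injective.mpr (Sym2.map.injective g.injective) h).symm hXY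
  · exact h

/-- The parity of a position of a vertex on one of its two cycles is read off from the
orientation, which is opposite on the other cycle; so parities of positions of common vertices
agree on one cycle exactly when they agree on the other. -/
lemma IsMixed.of_neighbor {X Y : S.Cycle} (hXY : cycEdges X ≠ cycEdges Y)
    {i₀ j₀ : ZMod (2 * S.r)} (hv : X.f i₀ = Y.f j₀) (hmix : IsMixed X i₀) : IsMixed Y j₀ := by
  obtain ⟨p, hp, hpar⟩ := hmix
  have hpY : X.f p ∈ attSet S (Y.f j₀) := by rw [← hv]; exact hp
  obtain ⟨q, hq⟩ := attSet_subset_cycVerts Y (mem_cycVerts Y j₀) hpY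
  refine ⟨q, show Y.f q ∈ attSet S (Y.f j₀) by rw [hq]; exact hpY, fun hqj => hpar ?_⟩
  obtain ⟨εX, hεX⟩ := exists_orient_iff_parity X
  obtain ⟨εY, hεY⟩ := exists_orient_iff_parity Y
  have h₁ := O_succ_iff_not_O_succ hXY hq.symm
  have h₂ := O_succ_iff_not_O_succ hXY hv
  rw [hεX, hεY, hqj] at h₁
  rw [hεX, hεY] at h₂
  exact (by decide : ∀ a b e : ZMod 2, (a = e ↔ b = e) → a = b) _ _ _ (h₁.trans h₂.symm)

lemma exists_eq_of_mem_attPos {X Y : S.Cycle} {i₀ j₀ : ZMod (2 * S.r)} (hv : X.f i₀ = Y.f j₀)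
    {q : ZMod (2 * S.r)} (hq : q ∈ attPos Y j₀) : ∃ p, X.f p = Y.f q :=
  attSet_subset_cycVerts X (mem_cycVerts X i₀) (show Y.f q ∈ attSet S (X.f i₀) by rw [hv]; exact hq)

/-- `ψ⁻¹ * φ` fixes the at least three vertices of an attachment set common to `X` and `Y`, and
only the identity of the dihedral group of `Y` does so. -/
lemma eq_on_of_eq_on_neighbor (hr : 2 ≤ S.r) (h3 : 3 ≤ S.att) {X Y : S.Cycle}
    {i₀ j₀ : ZMod (2 * S.r)} (hv : X.f i₀ = Y.f j₀) {φ ψ : S.Γ ≃g S.Γ}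
    (hφ : φ ∈ edgeStab S.Γ (cycEdges Y)) (hψ : ψ ∈ edgeStab S.Γ (cycEdges Y))
    (hX : ∀ i, φ (X.f i) = ψ (X.f i)) (i : ZMod (2 * S.r)) : φ (Y.f i) = ψ (Y.f i) := by
  have hfixA : ∀ q ∈ attPos Y j₀, (ψ⁻¹ * φ) (Y.f q) = Y.f q := by
    intro q hq
    obtain ⟨p, hp⟩ := exists_eq_of_mem_attPos hv hq
    rw [← hp, RelIso.mul_apply, hX]
    simp
  have hρ := fixes_of_three_le_ncard hr Y (ψ⁻¹ * φ).injective (mul_mem (inv_mem hψ) hφ) hfixA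
    (by rw [ncard_attPos]; exact h3) i
  rw [RelIso.mul_apply] at hρ
  calc φ (Y.f i) = ψ (ψ⁻¹ (φ (Y.f i))) := by simp
    _ = ψ (Y.f i) := by rw [hρ]

end BlockAction

section Propagation

/-- On the attachment set, `h` is the fixed-point-free involution `q ↦ cY - q`, and it preserves
the classes `q + {0, r}` of positions of equal parity: so it swaps `q` and `q + r`. -/
lemma add_self_add_r_eq_of_reflection (hr : 2 ≤ S.r) {X Y : S.Cycle} {i₀ j₀ : ZMod (2 * S.r)}
    (hv : X.f i₀ = Y.f j₀) {h : S.Γ ≃g S.Γ} (hh : h ∈ S.G)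
    (hrotX : ∀ i, h (X.f i) = X.f (i + S.r)) {cY : ZMod (2 * S.r)}
    (hreflY : ∀ i, h (Y.f i) = Y.f (cY - i)) (hA : h '' attSet S (Y.f j₀) = attSet S (Y.f j₀))
    (hHY : evenStab Y j₀ = AddSubgroup.zmultiples (S.r : ZMod (2 * S.r)))
    {q : ZMod (2 * S.r)} (hq : q ∈ attPos Y j₀) : q + q + S.r = cY := by
  have hmem : cY - q - q ∈ evenStab Y j₀ := by
    have hAq : h '' attSet S (Y.f q) = attSet S (Y.f q) := by
      rw [attSet_eq_of_mem hq]; exact hA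
    rw [← evenStab_eq_of_mem Y hq, mem_evenStab_iff Y hr, map_sub, map_sub,
      parity_eq_zero_of_reflection hh Y hreflY, show q + (cY - q - q) = cY - q by ring]
    exact ⟨(by decide : ∀ x : ZMod 2, 0 - x - x = 0) _,
      mem_attPos_of_image_eq Y (hreflY q) hAq⟩
  have hne : cY - q - q ≠ 0 := by
    intro h0
    obtain ⟨p, hp⟩ := exists_eq_of_mem_attPos hv hq
    have hfixp : h (X.f p) = X.f p := by
      rw [hp, hreflY, show cY - q = q by linear_combination h0]
    rw [hrotX] at hfixp
    exact natCast_r_ne_zero (by simpa using X.inj hfixp)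
  rw [hHY] at hmem
  rcases eq_zero_or_eq_r_of_add_self (add_self_eq_zero_of_mem_zmultiples_r hmem) with h0 | h0
  · exact absurd h0 hne
  · linear_combination -h0

lemma false_of_reflection_of_evenStab_eq_zmultiples_r (hr : 2 ≤ S.r) (h3 : 3 ≤ S.att)
    {X Y : S.Cycle} (hXY : cycEdges X ≠ cycEdges Y) {i₀ j₀ : ZMod (2 * S.r)}
    (hv : X.f i₀ = Y.f j₀) {h : S.Γ ≃g S.Γ} (hh : h ∈ S.G)
    (hH : evenStab X i₀ = AddSubgroup.zmultiples (S.r : ZMod (2 * S.r)))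
    (hrotX : ∀ i, h (X.f i) = X.f (i + S.r)) {cY : ZMod (2 * S.r)}
    (hreflY : ∀ i, h (Y.f i) = Y.f (cY - i)) : False := by
  have hcard : Nat.card (evenStab X i₀) = 2 := by
    rw [hH, Nat.card_zmultiples, addOrderOf_r]
  have hmixX : IsMixed X i₀ := by
    by_contra hm
    have := card_evenStab_of_not_isMixed X hr hm
    omega
  have hmixY := hmixX.of_neighbor hXY hv
  have hHY : evenStab Y j₀ = AddSubgroup.zmultiples (S.r : ZMod (2 * S.r)) := by
    rw [← hH]
    apply IsAddCyclic.addSubgroup_eq_of_card_eq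
    have := card_evenStab_of_isMixed X hr hmixX
    have := card_evenStab_of_isMixed Y hr hmixY
    omega
  have hrH : (S.r : ZMod (2 * S.r)) ∈ evenStab X i₀ := hH ▸ AddSubgroup.mem_zmultiples _
  have hr0 : parity S S.r = 0 := ((mem_evenStab_iff X hr).mp hrH).1
  have hA : h '' attSet S (Y.f j₀) = attSet S (Y.f j₀) := by
    rw [← hv]
    exact image_attSet_of_rotation hr hh X hrotX hrH i₀
  have hkey := fun q (hq : q ∈ attPos Y j₀) =>
    add_self_add_r_eq_of_reflection hr hv hh hrotX hreflY hA hHY hq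
  obtain ⟨q, hq, hpar⟩ := hmixY
  rcases eq_zero_or_eq_r_of_add_self (s := q - j₀)
    (by linear_combination hkey q hq - hkey j₀ (mem_attPos_self Y j₀)) with h0 | h0
  · exact hpar (by rw [sub_eq_zero.mp h0])
  · exact hpar (by rw [← sub_eq_zero, ← map_sub, h0, hr0])

/-- Squaring the reflection gives `2 e₀ = 0`. If `e₀ = 0`, the reflection would fix the at least
three positions of a common attachment set; otherwise `e₀ = r`. -/
lemma not_reflection_of_neighbor (hr : 2 ≤ S.r) (h3 : 3 ≤ S.att) {X Y : S.Cycle}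
    (hXY : cycEdges X ≠ cycEdges Y) {i₀ j₀ : ZMod (2 * S.r)} (hv : X.f i₀ = Y.f j₀)
    {h : S.Γ ≃g S.Γ} (hh : h ∈ S.G) {e₀ : ZMod (2 * S.r)}
    (he₀ : AddSubgroup.zmultiples e₀ = evenStab X i₀) (hrotX : ∀ i, h (X.f i) = X.f (i + e₀))
    (cY : ZMod (2 * S.r)) : ¬ ∀ i, h (Y.f i) = Y.f (cY - i) := by
  intro hreflY
  have h2e : e₀ + e₀ = 0 := by
    have hsq : h (h (X.f i₀)) = X.f i₀ := by rw [hv, hreflY, hreflY, sub_sub_cancel]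
    rw [hrotX, hrotX] at hsq
    linear_combination X.inj hsq
  rcases eq_zero_or_eq_r_of_add_self h2e with rfl | rfl
  · have hfix : ∀ q ∈ attPos Y j₀, h (Y.f q) = Y.f q := by
      intro q hq
      obtain ⟨p, hp⟩ := exists_eq_of_mem_attPos hv hq
      rw [← hp, hrotX, add_zero]
    have := ncard_le_two_of_reflection Y hreflY hfix
    rw [ncard_attPos] at this
    omega
  · exact false_of_reflection_of_evenStab_eq_zmultiples_r hr h3 hXY hv hh he₀.symm hrotX hreflY

def FixesWithAttSets (S : Setup V) (g : S.Γ ≃g S.Γ) (E : Set (Sym2 V)) : Prop :=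
  g ∈ edgeStab S.Γ E ∧ ∀ v ∈ suppOf E, g '' attSet S v = attSet S v

lemma FixesWithAttSets.of_neighbor (hr : 2 ≤ S.r) (h3 : 3 ≤ S.att) (har : S.att < S.r)
    {g : S.Γ ≃g S.Γ} (hg : g ∈ S.G) {X Y : S.Cycle} (hX : FixesWithAttSets S g (cycEdges X))
    {i₀ j₀ : ZMod (2 * S.r)} (hv : X.f i₀ = Y.f j₀) : FixesWithAttSets S g (cycEdges Y) := by
  by_cases hXY : cycEdges X = cycEdges Y
  · rwa [← hXY]
  have hattSetsX : ∀ i, g '' attSet S (X.f i) = attSet S (X.f i) := fun i =>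
    hX.2 _ (by rw [suppOf_cycEdges]; exact mem_cycVerts X i)
  have hvX := mem_cycVerts X i₀
  have hvY : X.f i₀ ∈ cycVerts Y := hv ▸ mem_cycVerts Y j₀
  have hgY := mem_edgeStab_of_neighbor hXY hvX hvY hg hX.1 (hattSetsX i₀)
  obtain ⟨k, hk, hgX⟩ := exists_rotation_of_image_attSet hr har hg X hX.1 hattSetsX
  rw [evenStab_eq X hr 0 i₀] at hk
  obtain ⟨e₀, he₀⟩ :=
    (AddSubgroup.isAddCyclic_iff_exists_zmultiples_eq_top (evenStab X i₀)).mp inferInstance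
  obtain ⟨n, rfl⟩ : k ∈ AddSubmonoid.multiples e₀ :=
    mem_multiples_iff_mem_zmultiples.mpr (he₀ ▸ hk)
  have he₀mem : e₀ ∈ evenStab X i₀ := he₀ ▸ AddSubgroup.mem_zmultiples e₀
  obtain ⟨h, hh, hhX, hhrot⟩ := exists_rotation hr X ((mem_evenStab_iff X hr).mp he₀mem).1
  have hhY := mem_edgeStab_of_neighbor hXY hvX hvY hh hhX
    (image_attSet_of_rotation hr hh X hhrot he₀mem i₀)
  rcases rotation_or_reflection (two_ne_zero_of_two_le hr) Y h.injective hhY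
    with ⟨eY, hhrotY⟩ | ⟨cY, hhreflY⟩
  swap
  · exact absurd hhreflY (not_reflection_of_neighbor hr h3 hXY hv hh he₀ hhrot cY)
  have hgrotY : ∀ i, g (Y.f i) = Y.f (i + n • eY) := fun i => by
    rw [eq_on_of_eq_on_neighbor hr h3 hv hgY (pow_mem hhY n)
      (fun i => by rw [hgX, pow_rotation hhrot]) i, pow_rotation hhrotY]
  refine ⟨hgY, fun w hw => ?_⟩
  obtain ⟨j, rfl⟩ : w ∈ cycVerts Y := by rwa [suppOf_cycEdges] at hw
  have hA : g '' attSet S (Y.f j₀) = attSet S (Y.f j₀) := hv ▸ hattSetsX i₀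
  exact image_attSet_of_rotation hr hg Y hgrotY (mem_evenStab_of_rotation hr hg Y hgrotY hA) j

lemma FixesWithAttSets.of_mem_cyclesAt (hr : 2 ≤ S.r) (h3 : 3 ≤ S.att) (har : S.att < S.r)
    {g : S.Γ ≃g S.Γ} (hg : g ∈ S.G) {v : V} {E F : Set (Sym2 V)} (hE : E ∈ cyclesAt S v)
    (hF : F ∈ cyclesAt S v) (hgE : FixesWithAttSets S g E) : FixesWithAttSets S g F := by
  obtain ⟨⟨X, rfl⟩, hvX⟩ := hE
  obtain ⟨⟨Y, rfl⟩, hvY⟩ := hF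
  rw [suppOf_cycEdges] at hvX hvY
  obtain ⟨i₀, rfl⟩ := hvX
  obtain ⟨j₀, hj₀⟩ := hvY
  exact hgE.of_neighbor hr h3 har hg hj₀.symm

lemma fixesWithAttSets_of_walk (hr : 2 ≤ S.r) (h3 : 3 ≤ S.att) (har : S.att < S.r)
    {g : S.Γ ≃g S.Γ} (hg : g ∈ S.G) {u w : V} (p : S.Γ.Walk u w)
    (hu : ∀ E ∈ cyclesAt S u, FixesWithAttSets S g E) :
    ∀ E ∈ cyclesAt S w, FixesWithAttSets S g E := by
  induction p with
  | nil => exact hu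
  | cons hadj p ih =>
    refine ih fun E hE => ?_
    obtain ⟨F, hF, hmem⟩ := exists_isAltEdgeSet_mem hadj
    exact (hu F ⟨hF, _, hmem, Sym2.mem_mk_left _ _⟩).of_mem_cyclesAt hr h3 har hg
      ⟨hF, _, hmem, Sym2.mem_mk_right _ _⟩ hE

end Propagation

end HalfArc

/-- Lemma 5.1 of the paper: if `3 ≤ a < r` and `γ ∈ G` fixes some
`G`-alternating cycle `C` setwise as well as every `G`-attachment set meeting `C`,
then `γ` fixes every `G`-alternating cycle setwise. -/
theorem statement_6 {V : Type*} (S : Setup V) (h3 : 3 ≤ S.att) (har : S.att < S.r)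
    (g : S.Γ ≃g S.Γ) (hg : g ∈ S.G) (c : AltCycle S.Γ S.O (2 * S.r))
    (hfix : Sym2.map (g : V → V) '' cycEdges c = cycEdges c)
    (hatt : ∀ A : Set V, IsAttSet S.Γ S.O (2 * S.r) A → (A ∩ cycVerts c).Nonempty →
      (g : V → V) '' A = A) :
    g ∈ S.altKernel := by
  have hr : 2 ≤ S.r := by omega
  have hc : FixesWithAttSets S g (cycEdges c) :=
    ⟨hfix, fun v hv => hatt _ (isAttSet_attSet v)
      ⟨v, mem_attSet_self v, by rwa [← suppOf_cycEdges]⟩⟩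
  refine ⟨hg, fun E ⟨x, hx⟩ => ?_⟩
  subst hx
  obtain ⟨p⟩ := S.conn.preconnected (c.f 0) (x.f 0)
  refine (fixesWithAttSets_of_walk hr h3 har hg p (fun E hE => ?_) _
    (mem_cyclesAt x (mem_cycVerts x 0))).1
  exact hc.of_mem_cyclesAt hr h3 har hg (mem_cyclesAt c (mem_cycVerts c 0)) hE
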